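/- arXiv:2410.00039 — 6 statements merged into one kernel-verified Lean document; each statement's English description precedes it below -/
import Mathlib

section
/- Define f0(N) = Σ_{j=1}^{n−1} (2^j − 1)·c_j(N), where n = ⌊log₂(N+1)⌋ and c_j(N) = a_j + 1 with a_j the j-th binary digit of N+1. Then for every N ≥ 2, f0(N) = ⌈N/2⌉ − 1 + f0(⌈N/2⌉ − 1), and f0(1) = 0. -/
/-- `a N j` is the coefficient of `2^j` in the binary expansion of `N+1`. -/
def a (N j : ℕ) : ℕ := if (N + 1).testBit j then 1 else 0

/-- `c N j = a N j + 1`. -/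
def c (N j : ℕ) : ℕ := a N j + 1

/-- Number of root fires: `f0 N = Σ_{j=1}^{n-1} (2^j - 1) * c_j(N)` with `n = ⌊log₂(N+1)⌋`. -/
def f0 (N : ℕ) : ℕ := ∑ j ∈ Finset.Icc 1 (Nat.log 2 (N + 1) - 1), (2 ^ j - 1) * c N j

/-- binary digit of `M` itself -/
def bb (M j : ℕ) : ℕ := if M.testBit j then 1 else 0

lemma shift_sum (f : ℕ → ℕ) (m : ℕ) :
    ∑ j ∈ Finset.Icc 1 m, f j = ∑ i ∈ Finset.range m, f (i + 1) := by
  induction m with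
  | zero => simp
  | succ m ih =>
    rw [Finset.sum_Icc_succ_top (by omega), ih, Finset.sum_range_succ]

lemma digit_sum (M : ℕ) : ∀ n, ∑ k ∈ Finset.range n, 2 ^ k * bb M k = M % 2 ^ n := by
  intro n
  induction n with
  | zero => simp [Nat.mod_one]
  | succ n ih =>
    rw [Finset.sum_range_succ, ih, pow_succ, Nat.mod_mul]
    have hb : bb M n = M / 2 ^ n % 2 := by
      have h2 := Nat.mod_two_eq_zero_or_one (M / 2 ^ n)
      simp only [bb, Nat.testBit_eq_decide_div_mod_eq]
      rcases h2 with h | h <;> simp [h]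
    rw [hb]

lemma two_geom_sum (m : ℕ) : ∑ i ∈ Finset.range m, 2 ^ i = 2 ^ m - 1 := by
  induction m with
  | zero => simp
  | succ m ih =>
    rw [Finset.sum_range_succ, ih, pow_succ]
    have : 1 ≤ 2 ^ m := Nat.one_le_two_pow
    omega

lemma key_sum (M : ℕ) (hM : 2 ≤ M) :
    ∑ i ∈ Finset.range (Nat.log 2 M - 1), 2 ^ i * (bb M (i + 1) + 1) = M / 2 - 1 := by
  set n := Nat.log 2 M with hn
  have hn1 : 1 ≤ n := Nat.log_pos (by norm_num) hM
  obtain ⟨m, hm⟩ : ∃ m, n = m + 1 := ⟨n - 1, by omega⟩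
  have hpow_le : 2 ^ n ≤ M := Nat.pow_log_le_self 2 (by omega)
  have hpow_lt : M < 2 ^ (n + 1) := Nat.lt_pow_succ_log_self (by norm_num) M
  have hps : 2 ^ (n + 1) = 2 * 2 ^ n := by rw [pow_succ]; ring
  have hmod : M % 2 ^ n = M - 2 ^ n := by
    rw [Nat.mod_eq_sub_mod hpow_le, Nat.mod_eq_of_lt (by omega)]
  have h1 := digit_sum M n
  rw [hmod, hm] at h1
  rw [Finset.sum_range_succ'] at h1
  have h2 : ∀ i : ℕ, 2 ^ (i + 1) * bb M (i + 1) = 2 * (2 ^ i * bb M (i + 1)) := by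
    intro i; rw [pow_succ]; ring
  simp only [h2, pow_zero, one_mul] at h1
  rw [← Finset.mul_sum] at h1
  set S := ∑ i ∈ Finset.range m, 2 ^ i * bb M (i + 1) with hS
  have hb0 : bb M 0 = M % 2 := by
    have h2 := Nat.mod_two_eq_zero_or_one M
    simp only [bb, Nat.testBit_zero]
    rcases h2 with h | h <;> simp [h]
  have hpm : 2 ^ (m + 1) = 2 * 2 ^ m := by rw [pow_succ]; ring
  have hle' : 2 ^ (m + 1) ≤ M := by rw [← hm]; exact hpow_le
  have hp1 : 1 ≤ 2 ^ m := Nat.one_le_two_pow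
  -- S = M / 2 - 2 ^ m
  have hSval : S = M / 2 - 2 ^ m := by omega
  have hsplit : ∀ i : ℕ, 2 ^ i * (bb M (i + 1) + 1) = 2 ^ i * bb M (i + 1) + 2 ^ i := by
    intro i; ring
  rw [show n - 1 = m by omega]
  simp only [hsplit]
  rw [Finset.sum_add_distrib, two_geom_sum, ← hS, hSval]
  omega

theorem f0_recursive :
    (∀ N : ℕ, 2 ≤ N → f0 N = (N + 1) / 2 - 1 + f0 ((N + 1) / 2 - 1)) ∧ f0 1 = 0 := by
  constructor
  · intro N hN
    have hM3 : 3 ≤ N + 1 := by omega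
    set M := N + 1 with hMdef
    have hK : (N + 1) / 2 - 1 + 1 = M / 2 := by omega
    have hlog1 : 1 ≤ Nat.log 2 M := Nat.log_pos (by norm_num) (by omega)
    set n := Nat.log 2 M with hn
    set m := n - 1 with hm
    have hf0N : f0 N = ∑ i ∈ Finset.range m, (2 ^ (i + 1) - 1) * (bb M (i + 1) + 1) := by
      simp only [f0, c, a, bb, ← hMdef, ← hn, ← hm]
      rw [shift_sum]
    have hlogdiv : Nat.log 2 (M / 2) = m := by rw [Nat.log_div_base, ← hn, hm]
    have hbdiv : ∀ j, bb (M / 2) j = bb M (j + 1) := by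
      intro j; simp only [bb, Nat.testBit_div_two]
    have hf0K : f0 ((N + 1) / 2 - 1) =
        ∑ i ∈ Finset.range (m - 1), (2 ^ (i + 1) - 1) * (bb M (i + 2) + 1) := by
      simp only [f0, c, a]
      rw [hK, hlogdiv, shift_sum]
      apply Finset.sum_congr rfl
      intro i _
      rw [show (2:ℕ) ^ (i+1) - 1 = 2 ^ (i+1) - 1 from rfl]
      congr 1
      rw [← hbdiv]
      rfl
    have hkey := key_sum M (by omega)
    rw [← hn, ← hm] at hkey
    rw [hf0N, hf0K, ← hkey]
    -- now pure sum identity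
    rcases Nat.eq_zero_or_pos m with h0 | hpos
    · simp [h0]
    obtain ⟨t, ht⟩ : ∃ t, m = t + 1 := ⟨m - 1, by omega⟩
    have hC : ∑ i ∈ Finset.range (m - 1), (2 ^ (i + 1) - 1) * (bb M (i + 2) + 1)
        = ∑ i ∈ Finset.range m, (2 ^ i - 1) * (bb M (i + 1) + 1) := by
      rw [ht]
      rw [Finset.sum_range_succ' (fun i => (2 ^ i - 1) * (bb M (i + 1) + 1)) t]
      simp
    rw [hC, ← Finset.sum_add_distrib]
    apply Finset.sum_congr rfl
    intro i _
    have hp : 1 ≤ 2 ^ i := Nat.one_le_two_pow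
    rw [pow_succ, show 2 ^ i * 2 - 1 = 2 ^ i + (2 ^ i - 1) by omega, Nat.add_mul]
  · have h2 : Nat.log 2 (1 + 1) = 1 := by simpa using Nat.log_pow (b := 2) (by norm_num) 1
    simp [f0, h2]
end

section
/- Let f0 be as defined via the binary expansion: f0(N) = Σ_{j=1}^{n−1}(2^j−1)(a_j+1) with n = ⌊log₂(N+1)⌋ and a_j the binary digits of N+1. If m = 2^i − 1 for some positive integer i, then f0(2m+2) − f0(2m) = i. -/
lemma sumA (n : ℕ) : ∑ j ∈ Finset.Icc 1 n, (2 ^ j - 1) = 2 ^ (n + 1) - (n + 2) := by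
  induction n with
  | zero => simp
  | succ n ih =>
    rw [Finset.sum_Icc_succ_top (by omega), ih]
    have h1 : n + 1 < 2 ^ (n + 1) := Nat.lt_two_pow_self
    have h2 : 2 ^ (n + 2) = 2 * 2 ^ (n + 1) := by ring
    omega

lemma testBit_pow_add_one (k j : ℕ) (h1 : 1 ≤ j) (h2 : j ≤ k) :
    (2 ^ (k + 1) + 1).testBit j = false := by
  rw [Nat.testBit_eq_decide_div_mod_eq]
  have hd : 2 ^ (k + 1) + 1 = 1 + 2 ^ (k + 1 - j) * 2 ^ j := by
    have hj : k + 1 - j + j = k + 1 := by omega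
    rw [← pow_add, hj]
    omega
  rw [hd, Nat.add_mul_div_right _ _ (Nat.two_pow_pos j),
    Nat.div_eq_of_lt (Nat.one_lt_two_pow (by omega))]
  have : 2 ^ (k + 1 - j) = 2 * 2 ^ (k - j) := by
    rw [← pow_succ']
    congr 1
    omega
  simp [this, Nat.mul_mod_right]

theorem f0_diff_pow (i m : ℕ) (hi : 1 ≤ i) (hm : m = 2 ^ i - 1) :
    (f0 (2 * m + 2) : ℤ) - (f0 (2 * m) : ℤ) = i := by
  have hp : 1 ≤ 2 ^ i := Nat.one_le_two_pow
  have hpow : 2 ^ (i + 1) = 2 * 2 ^ i := by ring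
  have e1 : 2 * m + 2 + 1 = 2 ^ (i + 1) + 1 := by omega
  have e2 : 2 * m + 1 = 2 ^ (i + 1) - 1 := by omega
  have hi1 : i + 1 < 2 ^ (i + 1) := Nat.lt_two_pow_self
  -- f0 (2m+2)
  have hlog1 : Nat.log 2 (2 ^ (i + 1) + 1) = i + 1 := by
    apply Nat.log_eq_of_pow_le_of_lt_pow (by omega)
    have : 2 ^ (i + 2) = 2 * 2 ^ (i + 1) := by ring
    omega
  have hf1 : f0 (2 * m + 2) = 2 ^ (i + 1) - (i + 2) := by
    rw [f0, e1, hlog1]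
    simp only [Nat.add_sub_cancel]
    rw [← sumA i]
    apply Finset.sum_congr rfl
    intro j hj
    simp only [Finset.mem_Icc] at hj
    simp [c, a, e1, testBit_pow_add_one i j hj.1 hj.2]
  -- f0 (2m)
  have hlog2 : Nat.log 2 (2 * m + 1) = i := by
    apply Nat.log_eq_of_pow_le_of_lt_pow <;> omega
  have hf2 : f0 (2 * m) = 2 * (2 ^ i - (i + 1)) := by
    rw [f0, hlog2]
    have : ∑ j ∈ Finset.Icc 1 (i - 1), (2 ^ j - 1) * c (2 * m) j
        = ∑ j ∈ Finset.Icc 1 (i - 1), (2 ^ j - 1) * 2 := by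
      apply Finset.sum_congr rfl
      intro j hj
      simp only [Finset.mem_Icc] at hj
      have : (2 * m + 1).testBit j = true := by
        rw [e2, Nat.testBit_two_pow_sub_one]
        simp
        omega
      simp [c, a, this]
    rw [this, ← Finset.sum_mul, sumA]
    have hip : 2 ^ (i - 1 + 1 + 1) = 2 * 2 ^ (i - 1 + 1) := by ring
    have hieq : i - 1 + 1 = i := by omega
    rw [hieq] at hip ⊢
    have : i < 2 ^ i := Nat.lt_two_pow_self
    omega
  rw [hf1, hf2]
  have h1 : i + 2 ≤ 2 ^ (i + 1) := by omega
  have h2 : i + 1 ≤ 2 ^ i := Nat.lt_two_pow_self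
  push_cast [Nat.cast_sub h1, Nat.cast_sub h2]
  ring
end

section
/- Let f0 be defined via the binary expansion: f0(N) = Σ_{j=1}^{n−1}(2^j−1)(a_j+1) with n = ⌊log₂(N+1)⌋. If m is a positive integer not of the form 2^k − 1 and the binary expansion of m ends with exactly i consecutive ones (i.e., m ≡ 2^i − 1 mod 2^{i+1}), then f0(2m+2) − f0(2m) = i + 1. -/
lemma geom_aux (i : ℕ) : ∑ j ∈ Finset.Icc 1 i, ((2:ℤ)^j - 1) = 2^(i+1) - 2 - i := by
  induction i with
  | zero => simp
  | succ k ih =>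
      rw [Finset.sum_Icc_succ_top (by omega), ih]
      push_cast
      ring

theorem f0_diff_general (m i : ℕ) (hm : 1 ≤ m) (hnot : ¬ ∃ k : ℕ, m = 2 ^ k - 1)
    (hi : m % 2 ^ (i + 1) = 2 ^ i - 1) :
    (f0 (2 * m + 2) : ℤ) - (f0 (2 * m) : ℤ) = i + 1 := by
  set n := Nat.log 2 (m + 1) with hn
  have hone : (1:ℕ) ≤ 2 ^ i := Nat.one_le_two_pow
  have hpowlt : (2:ℕ) ^ i < 2 ^ (i+1) := by
    have := Nat.pow_lt_pow_succ (a := 2) (by norm_num) (n := i); simpa using this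
  -- q and decomposition
  set q := m / 2 ^ (i + 1) with hq
  have hdecomp : m = 2 ^ (i+1) * q + (2 ^ i - 1) := by
    have h := Nat.div_add_mod m (2 ^ (i+1))
    rw [← hq] at h
    omega
  have hq1 : 1 ≤ q := by
    by_contra h
    have hq0 : q = 0 := Nat.lt_one_iff.mp (not_le.mp h)
    rw [hq0, mul_zero, zero_add] at hdecomp
    exact hnot ⟨i, hdecomp⟩
  have hm1 : m + 1 = 2 ^ (i+1) * q + 2 ^ i := by omega
  have hdivq : (m + 1) / 2 ^ (i+1) = q := by
    rw [hm1, Nat.mul_add_div (by positivity), Nat.div_eq_of_lt hpowlt, add_zero]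
  have hmod1 : (m + 1) % 2 ^ (i+1) = 2 ^ i := by
    rw [hm1, Nat.mul_add_mod, Nat.mod_eq_of_lt hpowlt]
  -- bit facts
  have hb0 : ∀ t, t < i → m.testBit t = true := by
    intro t ht
    have h1 : (m % 2 ^ (i+1)).testBit t = (decide (t < i+1) && m.testBit t) :=
      Nat.testBit_mod_two_pow m (i+1) t
    rw [hi, Nat.testBit_two_pow_sub_one] at h1
    simpa [ht, Nat.lt_succ_of_lt ht] using h1.symm
  have hb1 : m.testBit i = false := by
    have h1 : (m % 2 ^ (i+1)).testBit i = (decide (i < i+1) && m.testBit i) :=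
      Nat.testBit_mod_two_pow m (i+1) i
    rw [hi, Nat.testBit_two_pow_sub_one] at h1
    simpa using h1.symm
  have hc0 : ∀ t, t < i → (m+1).testBit t = false := by
    intro t ht
    have h1 : ((m+1) % 2 ^ (i+1)).testBit t = (decide (t < i+1) && (m+1).testBit t) :=
      Nat.testBit_mod_two_pow (m+1) (i+1) t
    rw [hmod1, Nat.testBit_two_pow] at h1
    simpa [Nat.lt_succ_of_lt ht, decide_eq_false (show ¬ i = t by omega)] using h1.symm
  have hc1 : (m+1).testBit i = true := by
    have h1 : ((m+1) % 2 ^ (i+1)).testBit i = (decide (i < i+1) && (m+1).testBit i) :=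
      Nat.testBit_mod_two_pow (m+1) (i+1) i
    rw [hmod1, Nat.testBit_two_pow] at h1
    simpa using h1.symm
  have heq : ∀ t, i < t → (m+1).testBit t = m.testBit t := by
    intro t ht
    have h1 : m.testBit t = (m >>> (i+1)).testBit (t - (i+1)) := by
      rw [Nat.testBit_shiftRight]; congr 1; omega
    have h2 : (m+1).testBit t = ((m+1) >>> (i+1)).testBit (t - (i+1)) := by
      rw [Nat.testBit_shiftRight]; congr 1; omega
    rw [h1, h2, Nat.shiftRight_eq_div_pow, Nat.shiftRight_eq_div_pow, hdivq]
  -- log facts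
  have hm1ne : m + 1 ≠ 0 := by omega
  have hpowle : 2 ^ n ≤ m + 1 := Nat.pow_log_le_self 2 hm1ne
  have hpowne : 2 ^ n ≠ m + 1 := by
    intro h
    exact hnot ⟨n, by omega⟩
  have hpowlt' : 2 ^ n < m + 1 := lt_of_le_of_ne hpowle hpowne
  have hltpow : m + 1 < 2 ^ (n + 1) := Nat.lt_pow_succ_log_self (by norm_num) _
  have hin : i + 1 ≤ n := by
    rw [Nat.le_log_iff_pow_le (by norm_num) hm1ne]
    calc (2:ℕ) ^ (i+1) ≤ 2 ^ (i+1) * q := by nlinarith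
    _ ≤ m + 1 := by omega
  have hlog1 : Nat.log 2 (2 * m + 1) = n + 1 := by
    apply Nat.log_eq_of_pow_le_of_lt_pow
    · calc (2:ℕ) ^ (n+1) = 2 * 2 ^ n := by ring
      _ ≤ 2 * m + 1 := by omega
    · calc 2 * m + 1 < 2 * (m + 1) := by omega
      _ ≤ 2 * 2 ^ (n+1) := by omega
      _ = 2 ^ (n+1+1) := by ring
  have hlog2 : Nat.log 2 (2 * m + 3) = n + 1 := by
    apply Nat.log_eq_of_pow_le_of_lt_pow
    · calc (2:ℕ) ^ (n+1) = 2 * 2 ^ n := by ring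
      _ ≤ 2 * m + 3 := by omega
    · calc 2 * m + 3 = 2 * (m + 1) + 1 := by ring
      _ < 2 ^ (n+1+1) := by
        have : m + 1 + 1 ≤ 2 ^ (n+1) := by omega
        calc 2 * (m+1) + 1 < 2 * (m + 1 + 1) := by omega
        _ ≤ 2 * 2 ^ (n+1) := by omega
        _ = 2 ^ (n+1+1) := by ring
  -- cast f0 to ℤ
  have castf0 : ∀ N : ℕ, (f0 N : ℤ) =
      ∑ j ∈ Finset.Icc 1 (Nat.log 2 (N + 1) - 1), ((2:ℤ) ^ j - 1) * c N j := by
    intro N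
    unfold f0
    rw [Nat.cast_sum]
    refine Finset.sum_congr rfl fun j _ => ?_
    rw [Nat.cast_mul, Nat.cast_sub (Nat.one_le_two_pow : (1:ℕ) ≤ 2 ^ j)]
    push_cast
    ring
  rw [castf0, castf0]
  have e1 : 2 * m + 2 + 1 = 2 * m + 3 := by ring
  have e2 : 2 * m + 0 + 1 = 2 * m + 1 := by ring
  rw [show (2 * m + 2 + 1) = 2 * m + 3 from by ring, hlog2]
  rw [show (2 * m + 1) = 2 * m + 1 from rfl]
  have hlog1' : Nat.log 2 (2 * m + 1) - 1 = n := by omega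
  have hlog2' : n + 1 - 1 = n := by omega
  rw [hlog2', hlog1', ← Finset.sum_sub_distrib]
  -- compute term values
  have hterm : ∀ j ∈ Finset.Icc 1 n,
      ((2:ℤ) ^ j - 1) * c (2*m+2) j - ((2:ℤ) ^ j - 1) * c (2*m) j =
      if j ≤ i then -((2:ℤ)^j - 1) else if j = i + 1 then (2:ℤ)^j - 1 else 0 := by
    intro j hj
    rw [Finset.mem_Icc] at hj
    obtain ⟨hj1, hj2⟩ := hj
    obtain ⟨t, rfl⟩ : ∃ t, j = t + 1 := ⟨j - 1, by omega⟩
    have hbit1 : (2*m+2+1).testBit (t+1) = (m+1).testBit t := by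
      rw [show 2*m+2+1 = 2*m+3 from by ring, Nat.testBit_succ,
        show (2*m+3)/2 = m + 1 from by omega]
    have hbit0 : (2*m+0+1).testBit (t+1) = m.testBit t := by
      rw [show 2*m+0+1 = 2*m+1 from by ring, Nat.testBit_succ,
        show (2*m+1)/2 = m from by omega]
    simp only [c, a, hbit1, hbit0]
    rcases lt_trichotomy t i with h | h | h
    · rw [hc0 t h, hb0 t h, if_pos (by omega : t + 1 ≤ i)]
      norm_num
      ring
    · subst h
      rw [hc1, hb1, if_neg (by omega : ¬ t + 1 ≤ t), if_pos rfl]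
      norm_num
      ring
    · rw [heq _ h, if_neg (by omega : ¬ t + 1 ≤ i), if_neg (by omega : ¬ t + 1 = i + 1)]
      norm_num
  rw [Finset.sum_congr rfl hterm]
  -- split the sum
  have hsplit : Finset.Icc 1 n = Finset.Icc 1 (i+1) ∪ Finset.Ioc (i+1) n := by
    ext x
    simp only [Finset.mem_union, Finset.mem_Icc, Finset.mem_Ioc]
    omega
  have hdisj : Disjoint (Finset.Icc 1 (i+1)) (Finset.Ioc (i+1) n) := by
    rw [Finset.disjoint_left]
    intro x hx hx'
    simp only [Finset.mem_Icc] at hx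
    simp only [Finset.mem_Ioc] at hx'
    omega
  rw [hsplit, Finset.sum_union hdisj]
  have hzero : ∑ j ∈ Finset.Ioc (i+1) n,
      (if j ≤ i then -((2:ℤ)^j - 1) else if j = i + 1 then (2:ℤ)^j - 1 else 0) = 0 := by
    apply Finset.sum_eq_zero
    intro x hx
    simp only [Finset.mem_Ioc] at hx
    rw [if_neg (by omega), if_neg (by omega)]
  rw [hzero, add_zero, Finset.sum_Icc_succ_top (by omega : 1 ≤ i + 1)]
  rw [if_neg (by omega : ¬ i + 1 ≤ i), if_pos rfl]
  have hmain : ∑ j ∈ Finset.Icc 1 i,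
      (if j ≤ i then -((2:ℤ)^j - 1) else if j = i + 1 then (2:ℤ)^j - 1 else 0) =
      -(2^(i+1) - 2 - i) := by
    rw [← geom_aux, ← Finset.sum_neg_distrib]
    refine Finset.sum_congr rfl fun x hx => ?_
    simp only [Finset.mem_Icc] at hx
    rw [if_pos hx.2]
  rw [hmain]
  ring
end

section
/- Define F via F(N) = Σ_{k=1}^{n−1}((k−1)2^k + 1)·c_k(N) with c_k(N) one plus the k-th binary digit of N+1 and n = ⌊log₂(N+1)⌋. If m = 2^i − 1 for a positive integer i, then F(2m+2) − F(2m) = 2^{i+1} − i − 2. -/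
def F (N : ℕ) : ℤ :=
  ∑ k ∈ Finset.Icc 1 (Nat.log 2 (N + 1) - 1), (((k : ℤ) - 1) * 2 ^ k + 1) * (c N k : ℤ)

lemma sum_closed (n : ℕ) :
    ∑ k ∈ Finset.Icc 1 n, (((k : ℤ) - 1) * 2 ^ k + 1) = ((n : ℤ) - 2) * 2 ^ (n + 1) + 4 + n := by
  induction n with
  | zero => simp
  | succ n ih =>
    rw [Finset.sum_Icc_succ_top (by omega), ih]
    push_cast [pow_succ]
    ring

theorem F_diff_pow (i m : ℕ) (hi : 1 ≤ i) (hm : m = 2 ^ i - 1) :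
    F (2 * m + 2) - F (2 * m) = 2 ^ (i + 1) - i - 2 := by
  subst hm
  have hp : (1 : ℕ) ≤ 2 ^ i := Nat.one_le_two_pow
  have hp1 : (1 : ℕ) ≤ 2 ^ (i + 1) := Nat.one_le_two_pow
  have e1 : 2 * (2 ^ i - 1) + 2 = 2 ^ (i + 1) := by rw [pow_succ]; omega
  have e2 : 2 * (2 ^ i - 1) = 2 ^ (i + 1) - 2 := by rw [pow_succ]; omega
  rw [e1, e2]
  have hlog1 : Nat.log 2 (2 ^ (i + 1) + 1) = i + 1 := by
    apply Nat.log_eq_of_pow_le_of_lt_pow (Nat.le_add_right _ _)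
    have : 2 ^ (i + 1 + 1) = 2 ^ (i + 1) * 2 := pow_succ 2 (i + 1)
    omega
  have hlog2 : Nat.log 2 (2 ^ (i + 1) - 2 + 1) = i := by
    have h2 : 2 ^ (i + 1) = 2 ^ i * 2 := pow_succ 2 i
    have : 2 ^ (i + 1) - 2 + 1 = 2 ^ (i + 1) - 1 := by omega
    rw [this]
    apply Nat.log_eq_of_pow_le_of_lt_pow <;> omega
  have hF1 : F (2 ^ (i + 1)) = ∑ k ∈ Finset.Icc 1 i, (((k : ℤ) - 1) * 2 ^ k + 1) := by
    unfold F
    rw [hlog1, Nat.add_sub_cancel]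
    apply Finset.sum_congr rfl
    intro k hk
    simp only [Finset.mem_Icc] at hk
    have ht : (2 ^ (i + 1) + 1).testBit k = false := by
      rw [Nat.testBit_two_pow_add_gt (by omega)]
      simp [Nat.testBit, Nat.shiftRight_eq_div_pow]
      have : (1 : ℕ) / 2 ^ k = 0 := Nat.div_eq_of_lt (by
        have : 2 ^ 1 ≤ 2 ^ k := Nat.pow_le_pow_right (by norm_num) hk.1
        omega)
      omega
    simp [c, a, ht]
  have hF2 : F (2 ^ (i + 1) - 2) =
      2 * ∑ k ∈ Finset.Icc 1 (i - 1), (((k : ℤ) - 1) * 2 ^ k + 1) := by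
    unfold F
    have h2 : 2 ^ (i + 1) = 2 ^ i * 2 := pow_succ 2 i
    rw [hlog2, Finset.mul_sum]
    apply Finset.sum_congr rfl
    intro k hk
    simp only [Finset.mem_Icc] at hk
    have hN : 2 ^ (i + 1) - 2 + 1 = 2 ^ (i + 1) - 1 := by omega
    have ht : (2 ^ (i + 1) - 2 + 1).testBit k = true := by
      rw [hN, Nat.testBit_two_pow_sub_one]
      simp; omega
    simp [c, a, ht]; ring
  rw [hF1, hF2, sum_closed, sum_closed]
  obtain ⟨j, rfl⟩ : ∃ j, i = j + 1 := ⟨i - 1, by omega⟩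
  have : (j + 1) - 1 = j := rfl
  rw [this]
  push_cast [pow_succ]
  ring
end

section
/- Define F via F(N) = Σ_{k=1}^{n−1}((k−1)2^k + 1)·c_k(N) with c_k(N) one plus the k-th binary digit of N+1 and n = ⌊log₂(N+1)⌋. If m is a positive integer not of the form 2^k − 1 and m ≡ 2^i − 1 (mod 2^{i+1}) for some i ≥ 0 (its binary expansion ends with a 0 followed by exactly i ones), then F(2m+2) − F(2m) = 2^{i+2} − i − 3. -/
private theorem testBit_aux (s x r j : ℕ) (hr : r < 2 ^ s) :
    (2 ^ s * x + r).testBit j = if j < s then r.testBit j else x.testBit (j - s) := by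
  rcases lt_or_ge j s with h | h
  · rw [if_pos h, Nat.testBit_eq_decide_div_mod_eq, Nat.testBit_eq_decide_div_mod_eq]
    have hs : 2 ^ s * x = 2 ^ j * (2 * (2 ^ (s - j - 1) * x)) := by
      have e : 2 ^ s = 2 ^ (j + 1 + (s - j - 1)) := by congr 1; omega
      rw [e, pow_add, pow_add, pow_one]; ring
    rw [hs, Nat.mul_add_div (Nat.two_pow_pos j)]
    simp only [decide_eq_decide]
    generalize r / 2 ^ j = q
    generalize 2 ^ (s - j - 1) * x = B
    omega
  · rw [if_neg (not_lt.mpr h), Nat.testBit_eq_decide_div_mod_eq, Nat.testBit_eq_decide_div_mod_eq]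
    have key : (2 ^ s * x + r) / 2 ^ j = x / 2 ^ (j - s) := by
      have e : 2 ^ j = 2 ^ s * 2 ^ (j - s) := by rw [← pow_add]; congr 1; omega
      rw [e, ← Nat.div_div_eq_div_mul, Nat.mul_add_div (Nat.two_pow_pos s),
        Nat.div_eq_of_lt hr, Nat.add_zero]
    rw [key]

private theorem bit_one (j : ℕ) : Nat.testBit 1 j = decide (j < 1) := by
  have := Nat.testBit_two_pow_sub_one 1 j
  simpa using this

private theorem sum_w (i : ℕ) :
    ∑ k ∈ Finset.Icc 1 i, (((k : ℤ) - 1) * 2 ^ k + 1)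
      = ((i : ℤ) - 2) * 2 ^ (i + 1) + 4 + i := by
  induction i with
  | zero => norm_num
  | succ n ih =>
    rw [Finset.sum_Icc_succ_top (by omega), ih]
    push_cast
    ring

theorem F_diff_general (m i : ℕ) (hm : 1 ≤ m) (hnot : ¬ ∃ k : ℕ, m = 2 ^ k - 1)
    (hi : m % 2 ^ (i + 1) = 2 ^ i - 1) :
    F (2 * m + 2) - F (2 * m) = 2 ^ (i + 2) - i - 3 := by
  -- decompose m
  have h0 := Nat.div_add_mod m (2 ^ (i + 1))
  rw [hi] at h0
  obtain ⟨t, hmt⟩ : ∃ t, m = 2 ^ (i + 1) * t + (2 ^ i - 1) := ⟨m / 2 ^ (i + 1), h0.symm⟩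
  obtain ⟨r, hr⟩ : ∃ r, 2 ^ i = r + 1 := ⟨2 ^ i - 1, by have := Nat.one_le_two_pow (n := i); omega⟩
  rw [hr, Nat.add_sub_cancel] at hmt
  have hQ : 2 ^ (i + 1) = 2 * r + 2 := by rw [pow_succ, hr]; ring
  have hR : 2 ^ (i + 2) = 4 * r + 4 := by rw [pow_succ, hQ]; ring
  have ht1 : 1 ≤ t := by
    rcases Nat.eq_zero_or_pos t with h | h
    · subst h
      exact absurd ⟨i, by omega⟩ hnot
    · exact h
  have h2m1 : 2 * m + 1 = 2 ^ (i + 2) * t + (2 * r + 1) := by rw [hmt]; ring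
  have h2m3 : 2 * m + 3 = 2 ^ (i + 2) * t + (2 * r + 3) := by rw [hmt]; ring
  have e1 : 2 * m + 2 + 1 = 2 * m + 3 := by omega
  -- bit facts
  have bitA_low : ∀ k, k ≤ i → (2 * m + 1).testBit k = true := by
    intro k hk
    rw [h2m1, testBit_aux _ _ _ _ (by omega), if_pos (by omega),
      show 2 * r + 1 = 2 ^ (i + 1) - 1 by omega, Nat.testBit_two_pow_sub_one]
    simpa using by omega
  have bitA_top : (2 * m + 1).testBit (i + 1) = false := by
    rw [h2m1, testBit_aux _ _ _ _ (by omega), if_pos (by omega),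
      show 2 * r + 1 = 2 ^ (i + 1) - 1 by omega, Nat.testBit_two_pow_sub_one]
    simp
  have bitlow3 : ∀ k, (2 * r + 3).testBit k
      = if k < i + 1 then Nat.testBit 1 k else Nat.testBit 1 (k - (i + 1)) := by
    intro k
    rw [show 2 * r + 3 = 2 ^ (i + 1) * 1 + 1 by omega, testBit_aux _ _ _ _ (by omega)]
  have bitB_low : ∀ k, 1 ≤ k → k ≤ i → (2 * m + 3).testBit k = false := by
    intro k h1 h2
    rw [h2m3, testBit_aux _ _ _ _ (by omega), if_pos (by omega), bitlow3,
      if_pos (by omega), bit_one]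
    simpa using by omega
  have bitB_top : (2 * m + 3).testBit (i + 1) = true := by
    rw [h2m3, testBit_aux _ _ _ _ (by omega), if_pos (by omega), bitlow3,
      if_neg (by omega), bit_one]
    simp
  have bit_high : ∀ k, i + 2 ≤ k → (2 * m + 3).testBit k = (2 * m + 1).testBit k := by
    intro k hk
    rw [h2m1, h2m3, testBit_aux _ _ _ _ (by omega), testBit_aux _ _ _ _ (by omega),
      if_neg (by omega), if_neg (by omega)]
  -- log facts
  set n := Nat.log 2 (2 * m + 1) with hn
  have hpow : 2 ^ n ≤ 2 * m + 1 := Nat.pow_log_le_self 2 (by omega)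
  have hpow2 : 2 * m + 1 < 2 ^ (n + 1) := Nat.lt_pow_succ_log_self (by norm_num) _
  have hge : i + 2 ≤ n := by
    refine (Nat.le_log_iff_pow_le (by norm_num) (by omega)).mpr ?_
    rw [h2m1]
    exact le_trans (Nat.le_mul_of_pos_right _ ht1) (Nat.le_add_right _ _)
  have hEn : 2 ^ (n + 1) = 2 * 2 ^ n := by ring
  have hne : 2 * m + 1 ≠ 2 ^ (n + 1) - 1 := by
    intro h
    exact hnot ⟨n, by omega⟩
  have hlog3 : Nat.log 2 (2 * m + 3) = n :=
    Nat.log_eq_of_pow_le_of_lt_pow (by omega) (by omega)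
  -- rewrite F
  simp only [F, e1, hlog3, ← hn]
  rw [← Finset.sum_sub_distrib]
  simp_rw [← mul_sub]
  have hsub : Finset.Icc 1 (i + 1) ⊆ Finset.Icc 1 (n - 1) :=
    Finset.Icc_subset_Icc le_rfl (by omega)
  rw [← Finset.sum_subset hsub (by
    intro k hk hk'
    simp only [Finset.mem_Icc] at hk hk'
    have hk2 : i + 2 ≤ k := by omega
    have hc : c (2 * m + 2) k = c (2 * m) k := by
      simp only [c, a, e1, bit_high k hk2]
    rw [hc, sub_self, mul_zero])]
  rw [Finset.sum_Icc_succ_top (by omega)]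
  have hterm : ∀ k ∈ Finset.Icc 1 i,
      (((k : ℤ) - 1) * 2 ^ k + 1) * ((c (2 * m + 2) k : ℤ) - (c (2 * m) k : ℤ))
        = -((((k : ℤ) - 1) * 2 ^ k + 1)) := by
    intro k hk
    simp only [Finset.mem_Icc] at hk
    have hcB : c (2 * m + 2) k = 1 := by
      simp only [c, a, e1, bitB_low k hk.1 hk.2]; rfl
    have hcA : c (2 * m) k = 2 := by
      simp only [c, a, bitA_low k hk.2]; rfl
    rw [hcB, hcA]
    push_cast
    ring
  rw [Finset.sum_congr rfl hterm]
  have hcB' : c (2 * m + 2) (i + 1) = 2 := by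
    simp only [c, a, e1, bitB_top]; rfl
  have hcA' : c (2 * m) (i + 1) = 1 := by
    simp only [c, a, bitA_top]; rfl
  rw [hcB', hcA', Finset.sum_neg_distrib, sum_w]
  push_cast
  ring
end

section
/- For every integer ℓ ≥ 4, the ratio inequality holds: (2^ℓ − 7)·(binom(2^ℓ − 6, 2^{ℓ−1} − 3) − binom(2^ℓ − 6, 2^{ℓ−1} − 6)) < (2^ℓ − 4)·C_{2^{ℓ−1} − 1}, where C_n is the n-th Catalan number. -/
lemma choose_ratio_id (k : ℕ) :
    (2*k+6).choose (k+3) * ((k+1)*(k+2)*(k+3))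
      = (2*k+6).choose k * ((k+4)*(k+5)*(k+6)) := by
  have e1 : (2*k+6).choose (k+1) * (k+1) = (2*k+6).choose k * (k+6) := by
    have h := Nat.choose_succ_right_eq (2*k+6) k
    have : 2*k+6 - k = k+6 := by omega
    rwa [this] at h
  have e2 : (2*k+6).choose (k+2) * (k+2) = (2*k+6).choose (k+1) * (k+5) := by
    have h := Nat.choose_succ_right_eq (2*k+6) (k+1)
    have : 2*k+6 - (k+1) = k+5 := by omega
    rwa [this] at h
  have e3 : (2*k+6).choose (k+3) * (k+3) = (2*k+6).choose (k+2) * (k+4) := by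
    have h := Nat.choose_succ_right_eq (2*k+6) (k+2)
    have : 2*k+6 - (k+2) = k+4 := by omega
    rwa [this] at h
  calc (2*k+6).choose (k+3) * ((k+1)*(k+2)*(k+3))
      = (2*k+6).choose (k+3) * (k+3) * ((k+1)*(k+2)) := by ring
    _ = (2*k+6).choose (k+2) * (k+4) * ((k+1)*(k+2)) := by rw [e3]
    _ = (2*k+6).choose (k+2) * (k+2) * ((k+1)*(k+4)) := by ring
    _ = (2*k+6).choose (k+1) * (k+5) * ((k+1)*(k+4)) := by rw [e2]
    _ = (2*k+6).choose (k+1) * (k+1) * ((k+4)*(k+5)) := by ring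
    _ = (2*k+6).choose k * (k+6) * ((k+4)*(k+5)) := by rw [e1]
    _ = (2*k+6).choose k * ((k+4)*(k+5)*(k+6)) := by ring

lemma key_ineq (k : ℕ) :
    (2*k+5) * ((2*k+6).choose (k+3) - (2*k+6).choose k)
      < (2*k+8) * catalan (k+5) := by
  set C3 := (2*k+6).choose (k+3) with hC3
  set C0 := (2*k+6).choose k with hC0
  have hC3cb : C3 = Nat.centralBinom (k+3) := by
    have h : 2*(k+3) = 2*k+6 := by ring
    rw [Nat.centralBinom, h]
  have hle : C0 ≤ C3 := by
    have h := Nat.choose_le_middle k (2*k+6)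
    have : (2*k+6)/2 = k+3 := by omega
    rwa [this] at h
  have hid := choose_ratio_id k
  have hpos : 0 < C3 := by
    rw [hC3cb]; exact Nat.centralBinom_pos _
  -- multiply goal by P = (k+4)*(k+5)*(k+6)
  have hPpos : 0 < (k+4)*(k+5)*(k+6) := by positivity
  rw [← Nat.mul_lt_mul_left hPpos]
  -- LHS computation
  have hdiff : (k+4)*(k+5)*(k+6) * (C3 - C0) = C3 * (9*k^2+63*k+114) := by
    have h1 : (k+4)*(k+5)*(k+6) * (C3 - C0) + (k+4)*(k+5)*(k+6) * C0
        = (k+4)*(k+5)*(k+6) * C3 := by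
      rw [← Nat.mul_add]
      congr 1
      omega
    have h2 : (k+4)*(k+5)*(k+6) * C0 = C3 * ((k+1)*(k+2)*(k+3)) := by
      rw [hid]; ring
    have h3 : (k+4)*(k+5)*(k+6) * C3
        = C3 * (9*k^2+63*k+114) + C3 * ((k+1)*(k+2)*(k+3)) := by ring
    omega
  -- RHS computation
  have hcat : (k+6) * catalan (k+5) = Nat.centralBinom (k+5) :=
    succ_mul_catalan_eq_centralBinom (k+5)
  have hcb1 : (k+5) * Nat.centralBinom (k+5) = 2 * (2*(k+4)+1) * Nat.centralBinom (k+4) :=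
    Nat.succ_mul_centralBinom_succ (k+4)
  have hcb2 : (k+4) * Nat.centralBinom (k+4) = 2 * (2*(k+3)+1) * Nat.centralBinom (k+3) :=
    Nat.succ_mul_centralBinom_succ (k+3)
  have hRHS : (k+4)*(k+5)*(k+6) * ((2*k+8) * catalan (k+5))
      = 4*(2*k+7)*(2*k+8)*(2*k+9) * C3 := by
    rw [hC3cb]
    calc (k+4)*(k+5)*(k+6) * ((2*k+8) * catalan (k+5))
        = (2*k+8) * ((k+4)*(k+5)) * ((k+6) * catalan (k+5)) := by ring
      _ = (2*k+8) * ((k+4)*(k+5)) * Nat.centralBinom (k+5) := by rw [hcat]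
      _ = (2*k+8) * (k+4) * ((k+5) * Nat.centralBinom (k+5)) := by ring
      _ = (2*k+8) * (k+4) * (2 * (2*(k+4)+1) * Nat.centralBinom (k+4)) := by rw [hcb1]
      _ = (2*k+8) * (2*(2*(k+4)+1)) * ((k+4) * Nat.centralBinom (k+4)) := by ring
      _ = (2*k+8) * (2*(2*(k+4)+1)) * (2 * (2*(k+3)+1) * Nat.centralBinom (k+3)) := by rw [hcb2]
      _ = 4*(2*k+7)*(2*k+8)*(2*k+9) * Nat.centralBinom (k+3) := by ring
  calc (k+4)*(k+5)*(k+6) * ((2*k+5) * (C3 - C0))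
      = (2*k+5) * ((k+4)*(k+5)*(k+6) * (C3 - C0)) := by ring
    _ = (2*k+5) * (C3 * (9*k^2+63*k+114)) := by rw [hdiff]
    _ = ((2*k+5) * (9*k^2+63*k+114)) * C3 := by ring
    _ < (4*(2*k+7)*(2*k+8)*(2*k+9)) * C3 := by
        exact (Nat.mul_lt_mul_right hpos).mpr (by nlinarith [sq_nonneg k, k.zero_le])
    _ = (k+4)*(k+5)*(k+6) * ((2*k+8) * catalan (k+5)) := hRHS.symm

theorem ballot_ratio_lt (ℓ : ℕ) (hℓ : 4 ≤ ℓ) :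
    (2 ^ ℓ - 7) *
        (Nat.choose (2 ^ ℓ - 6) (2 ^ (ℓ - 1) - 3) - Nat.choose (2 ^ ℓ - 6) (2 ^ (ℓ - 1) - 6))
      < (2 ^ ℓ - 4) * catalan (2 ^ (ℓ - 1) - 1) := by
  obtain ⟨p, rfl⟩ : ∃ p, ℓ = p + 1 := ⟨ℓ - 1, by omega⟩
  have hp : 3 ≤ p := by omega
  have hN : 8 ≤ 2 ^ p := by
    calc 8 = 2 ^ 3 := by norm_num
      _ ≤ 2 ^ p := Nat.pow_le_pow_right (by norm_num) hp
  obtain ⟨k, hk⟩ : ∃ k, 2 ^ p = k + 6 := ⟨2 ^ p - 6, by omega⟩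
  have h2 : 2 ^ (p+1) = 2 * k + 12 := by
    rw [pow_succ]; omega
  simp only [Nat.add_sub_cancel, hk, h2]
  have e1 : 2*k+12-7 = 2*k+5 := by omega
  have e2 : 2*k+12-6 = 2*k+6 := by omega
  have e3 : k+6-3 = k+3 := by omega
  have e4 : k+6-6 = k := by omega
  have e5 : 2*k+12-4 = 2*k+8 := by omega
  have e6 : k+6-1 = k+5 := by omega
  rw [e1, e2, e3, e5, e6]
  exact key_ineq k
end
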